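/- Let c = (c_1,…,c_n) be a vector of non-negative integers and d ≥ 1, ℓ ≥ 0 integers. Then the ideal (I_{c,n,d+ℓ})_{>ℓ}, generated by all c-bounded monomials of degree d + ℓ whose support has more than ℓ elements, is a polymatroidal ideal. (Equivalently, the ℓ-th homological shift ideal HS_ℓ(I_{c,n,d}) is polymatroidal.) -/

import Mathlib

/-! Moving one unit from `i` to `j` keeps the degree, and keeps `c`-boundedness as soon as
`a j < b j ≤ c j`. The support can only lose `i`, and only when `a i = 1`. If `b` has a coordinate
outside `supp a`, take `j` there: the support gains `j`. Otherwise `supp b ⊆ supp a`, and when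
`a i = 1` also `b i = 0`, so `supp b ⊆ (supp a \ {i}) ∪ {j}`. -/

open Finsupp Finset

section Exchange

variable {ι : Type*} {a b : ι →₀ ℕ} {i j : ι}

theorem sum_sub_single_add_single [Fintype ι] (hi : 1 ≤ a i) :
    ∑ k, (a - single i 1 + single j 1 : ι →₀ ℕ) k = ∑ k, a k := by
  classical
  have hsingle : ∀ l : ι, ∑ k, single l 1 k = 1 := fun l => by
    simp [single_apply]
  have hcancel : a - single i 1 + single i 1 = a := tsub_add_cancel_of_le (single_le_iff.2 hi)
  conv_rhs => rw [← hcancel]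
  simp only [Finsupp.add_apply, sum_add_distrib, hsingle]

theorem sub_single_add_single_apply_le {c : ι → ℕ} (ha : ∀ k, a k ≤ c k) (hj : a j < c j)
    (k : ι) :
    (a - single i 1 + single j 1 : ι →₀ ℕ) k ≤ c k := by
  classical
  have hle : (a - single i 1 : ι →₀ ℕ) k ≤ a k := by rw [tsub_apply]; exact Nat.sub_le _ _
  rw [Finsupp.add_apply, single_apply]
  split_ifs with hjk
  · subst hjk; omega
  · simpa using hle.trans (ha k)

theorem insert_erase_support_subset_support_sub_single_add_single [DecidableEq ι] :
    insert j (a.support.erase i) ⊆ (a - single i 1 + single j 1 : ι →₀ ℕ).support := by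
  intro k hk
  rw [mem_support_iff, Finsupp.add_apply, tsub_apply]
  rcases mem_insert.1 hk with rfl | hk
  · simp
  · obtain ⟨hki, hk⟩ := mem_erase.1 hk
    simp [single_apply, Ne.symm hki, mem_support_iff.1 hk]

theorem support_subset_support_sub_single_add_single (hi : 2 ≤ a i) :
    a.support ⊆ (a - single i 1 + single j 1 : ι →₀ ℕ).support := by
  intro k hk
  rw [mem_support_iff, Finsupp.add_apply, tsub_apply]
  rw [mem_support_iff] at hk
  rcases eq_or_ne i k with rfl | hki
  · simp only [single_eq_same]; omega
  · simp [hki, hk]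

theorem min_card_support_le_card_support_sub_single_add_single [DecidableEq ι]
    (hi : b i < a i) (hsupp : a j = 0 ∨ b.support ⊆ a.support) :
    min #a.support #b.support ≤ #(a - single i 1 + single j 1 : ι →₀ ℕ).support := by
  have hsub := insert_erase_support_subset_support_sub_single_add_single (a := a) (i := i) (j := j)
  have hia : i ∈ a.support := mem_support_iff.2 (by omega)
  rcases hsupp with haj | hba
  · have hja : j ∉ a.support.erase i := fun h => mem_support_iff.1 (mem_of_mem_erase h) haj
    have hcard : #(insert j (a.support.erase i)) = #a.support := by
      rw [card_insert_of_notMem hja, card_erase_of_mem hia]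
      have := card_pos.2 ⟨i, hia⟩
      omega
    exact min_le_left _ _ |>.trans (hcard ▸ card_le_card hsub)
  · by_cases h2 : 2 ≤ a i
    · exact min_le_left _ _ |>.trans
        (card_le_card (support_subset_support_sub_single_add_single h2))
    · have hbi : i ∉ b.support := by rw [mem_support_iff]; omega
      have hb : b.support ⊆ insert j (a.support.erase i) := fun k hk =>
        mem_insert_of_mem (mem_erase.2 ⟨fun h => hbi (h ▸ hk), hba hk⟩)
      exact min_le_right _ _ |>.trans (card_le_card (hb.trans hsub))

theorem exists_lt_and_eq_zero_or_support_subset [Fintype ι]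
    (hsum : ∑ k, a k = ∑ k, b k) (hi : b i < a i) :
    ∃ j, a j < b j ∧ (a j = 0 ∨ b.support ⊆ a.support) := by
  by_cases hnew : ∃ j, a j = 0 ∧ 0 < b j
  · obtain ⟨j, haj, hbj⟩ := hnew
    exact ⟨j, by omega, Or.inl haj⟩
  · push Not at hnew
    obtain ⟨j, hj⟩ : ∃ j, a j < b j := by
      by_contra! h
      exact (sum_lt_sum (fun k _ => h k) ⟨i, mem_univ i, hi⟩).ne' hsum
    refine ⟨j, hj, Or.inr fun k hk => mem_support_iff.2 fun hak => ?_⟩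
    exact mem_support_iff.1 hk (Nat.le_zero.1 (hnew k hak))

end Exchange

theorem stmt_6_general {n : ℕ} (c : Fin n → ℕ) (d ℓ : ℕ) :
    ∀ a b : Fin n →₀ ℕ,
      ((∑ i, a i) = d + ℓ ∧ (∀ i, a i ≤ c i) ∧ ℓ < a.support.card) →
      ((∑ i, b i) = d + ℓ ∧ (∀ i, b i ≤ c i) ∧ ℓ < b.support.card) →
      ∀ i : Fin n, b i < a i → ∃ j : Fin n, a j < b j ∧
        ((∑ k, (a - Finsupp.single i 1 + Finsupp.single j 1 : Fin n →₀ ℕ) k) = d + ℓ ∧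
         (∀ k, (a - Finsupp.single i 1 + Finsupp.single j 1 : Fin n →₀ ℕ) k ≤ c k) ∧
         ℓ < (a - Finsupp.single i 1 + Finsupp.single j 1 : Fin n →₀ ℕ).support.card) := by
  rintro a b ⟨hsa, hca, hla⟩ ⟨hsb, hcb, hlb⟩ i hi
  obtain ⟨j, hj, hsupp⟩ := exists_lt_and_eq_zero_or_support_subset (hsa.trans hsb.symm) hi
  refine ⟨j, hj, ?_, sub_single_add_single_apply_le hca (hj.trans_le (hcb j)), ?_⟩
  · rw [sum_sub_single_add_single (by omega), hsa]
  · exact (lt_min hla hlb).trans_le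
      (min_card_support_le_card_support_sub_single_add_single hi hsupp)

/-- the ideal `(I_{c,n,d+ℓ})_{>ℓ}`, whose minimal monomial generators are exactly the
`c`-bounded monomials of degree `d + ℓ` whose support has more than `ℓ` elements, is polymatroidal:
its set of (exponent vectors of) minimal generators satisfies the exchange property. -/
theorem stmt_6 {n : ℕ} (c : Fin n → ℕ) (d ℓ : ℕ) (hd : 1 ≤ d) :
    ∀ a b : Fin n →₀ ℕ,
      ((∑ i, a i) = d + ℓ ∧ (∀ i, a i ≤ c i) ∧ ℓ < a.support.card) →
      ((∑ i, b i) = d + ℓ ∧ (∀ i, b i ≤ c i) ∧ ℓ < b.support.card) →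
      ∀ i : Fin n, b i < a i → ∃ j : Fin n, a j < b j ∧
        ((∑ k, (a - Finsupp.single i 1 + Finsupp.single j 1 : Fin n →₀ ℕ) k) = d + ℓ ∧
         (∀ k, (a - Finsupp.single i 1 + Finsupp.single j 1 : Fin n →₀ ℕ) k ≤ c k) ∧
         ℓ < (a - Finsupp.single i 1 + Finsupp.single j 1 : Fin n →₀ ℕ).support.card) :=
  stmt_6_general c d ℓ
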